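/- For two unit-speed flows crossing at encounter angle θ with 0 < θ < π, a lateral displacement of magnitude d perpendicular to one flow corresponds to a displacement of magnitude d/|sin(θ/2)| along the direction bisecting the two flow directions; equivalently, if a point must be moved distance d in the direction perpendicular to the relative velocity of the two flows, and the motion is constrained to be perpendicular to the aircraft's own velocity, the required motion has magnitude d/|sin(θ/2)|. -/

import Mathlib

open scoped RealInnerProductSpace

/-!
Since `u₁ - u₂ = (1 - cos θ, -sin θ)` has length `2 |sin (θ/2)|` and first coordinate
`2 sin² (θ/2)`, a unit vector `w ⟂ u₁ - u₂` has `|w₁| = |sin (θ/2)|`. The displacement `x • n`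
has component `x w₁` along `w`, so `|x| |sin (θ/2)| = d`.
-/

namespace EuclideanSpace

lemma abs_apply_one_mul_norm_of_inner_eq_zero {w v : EuclideanSpace ℝ (Fin 2)}
    (hw : ‖w‖ = 1) (hwv : ⟪w, v⟫ = 0) : |w 1| * ‖v‖ = |v 0| := by
  have hw' : w 0 ^ 2 + w 1 ^ 2 = 1 := by
    simpa [EuclideanSpace.real_norm_sq_eq, Fin.sum_univ_two, hw] using
      (EuclideanSpace.real_norm_sq_eq w).symm
  have hwv' : w 0 * v 0 + w 1 * v 1 = 0 := by
    simpa [PiLp.inner_apply, Fin.sum_univ_two, mul_comm] using hwv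
  -- `w₁ v₁ = -w₀ v₀` turns `w₁² ‖v‖²` into `(w₀² + w₁²) v₀²`.
  have hsq : (|w 1| * ‖v‖) ^ 2 = |v 0| ^ 2 := by
    rw [mul_pow, sq_abs, sq_abs, EuclideanSpace.real_norm_sq_eq, Fin.sum_univ_two]
    linear_combination v 0 ^ 2 * hw' + (w 1 * v 1 - w 0 * v 0) * hwv'
  exact (pow_left_inj₀ (by positivity) (abs_nonneg _) two_ne_zero).mp hsq

end EuclideanSpace

lemma norm_sub_cos_sin_eq_two_mul_abs_sin_half (θ : ℝ) :
    ‖(!₂[1, 0] - !₂[Real.cos θ, Real.sin θ] : EuclideanSpace ℝ (Fin 2))‖ =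
      2 * |Real.sin (θ / 2)| := by
  have hsq : ‖(!₂[1, 0] - !₂[Real.cos θ, Real.sin θ] : EuclideanSpace ℝ (Fin 2))‖ ^ 2 =
      (2 * |Real.sin (θ / 2)|) ^ 2 := by
    rw [EuclideanSpace.real_norm_sq_eq, Fin.sum_univ_two, mul_pow, sq_abs,
      Real.sin_sq_eq_half_sub, mul_div_cancel₀ θ two_ne_zero]
    simp only [PiLp.sub_apply, Matrix.cons_val_zero, Matrix.cons_val_one]
    linear_combination Real.sin_sq_add_cos_sq θ
  exact (pow_left_inj₀ (norm_nonneg _) (by positivity) two_ne_zero).mp hsq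

/-- Arbitrary encounter angle geometry: an aircraft in flow 1 (direction
`u₁ = (1,0)`), constrained to displace along the unit normal `n = (0,1)` to
its own velocity, needs a displacement of magnitude `|x| = d / |sin (θ/2)|` to
achieve component `d` in a unit direction `w` perpendicular to the relative
velocity `u₁ − u₂`, where `u₂ = (cos θ, sin θ)` and `0 < θ < π`. -/
theorem encounter_angle_deviation (θ d x : ℝ) (hθ : θ ∈ Set.Ioo 0 Real.pi)
    (hd : 0 ≤ d) (u₁ u₂ n w : EuclideanSpace ℝ (Fin 2))
    (hu₁ : u₁ = !₂[1, 0]) (hu₂ : u₂ = !₂[Real.cos θ, Real.sin θ])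
    (hn : n = !₂[0, 1])
    (hw : ‖w‖ = 1) (hperp : ⟪w, u₁ - u₂⟫ = 0)
    (hx : ⟪x • n, w⟫ = d) :
    |x| = d / |Real.sin (θ / 2)| := by
  subst hu₁ hu₂ hn
  have hs : Real.sin (θ / 2) ≠ 0 :=
    (Real.sin_pos_of_pos_of_lt_pi (by linarith [hθ.1]) (by linarith [hθ.2, Real.pi_pos])).ne'
  have hfirst : (!₂[1, 0] - !₂[Real.cos θ, Real.sin θ] : EuclideanSpace ℝ (Fin 2)) 0 =
      2 * Real.sin (θ / 2) ^ 2 := by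
    rw [Real.sin_sq_eq_half_sub, mul_div_cancel₀ θ two_ne_zero]
    simp only [PiLp.sub_apply, Matrix.cons_val_zero]
    ring
  have hw₁ : |w 1| = |Real.sin (θ / 2)| := by
    have h := EuclideanSpace.abs_apply_one_mul_norm_of_inner_eq_zero hw hperp
    rw [norm_sub_cos_sin_eq_two_mul_abs_sin_half, hfirst, abs_mul, abs_two, abs_pow, sq] at h
    exact mul_right_cancel₀ (by positivity) (h.trans (by ring))
  have hxw : x * w 1 = d := by
    simpa [PiLp.inner_apply, Fin.sum_univ_two, mul_comm] using hx
  rw [eq_div_iff (abs_ne_zero.mpr hs), ← hw₁, ← abs_mul, hxw, abs_of_nonneg hd]
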